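/- arXiv:2305.01231 — 4 statements merged into one kernel-verified Lean document; each statement's English description precedes it below -/
import Mathlib

section
/- Paley–Wiener growth estimate: Let a > 0 and f ∈ L₂((−a,a);ℂ), and define F(ρ) = ∫_{−a}^{a} f(x) e^{iρx} dx for ρ ∈ ℂ. Then F(ρ) = o(e^{a|Im ρ|}) as |ρ| → ∞, uniformly with respect to arg ρ; that is, for every ε > 0 there exists R > 0 such that |F(ρ)| ≤ ε e^{a|Im ρ|} for all ρ ∈ ℂ with |ρ| ≥ R. -/
/-!
On `[-a, a]` we have `|e^{iρx}| ≤ e^{a|Im ρ|}`, so `‖F(ρ)‖ ≤ ‖f‖_{L¹} e^{a|Im ρ|}` for any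
integrable `f`. For a `C¹` function `h`, integrating by parts against `e^{iρx} / (iρ)` gains a
factor `1/|ρ|`. Approximating `f` in `L¹(-a, a)` by a smooth `h` within `ε/2` and taking `|ρ|`
large enough to make the `h`-part smaller than `(ε/2) e^{a|Im ρ|}` gives the estimate.
-/

open MeasureTheory Set Filter Topology Complex
open scoped ContDiff

lemma norm_cexp_I_mul_ofReal_le {a x : ℝ} (hx : |x| ≤ a) (ρ : ℂ) :
    ‖cexp (I * ρ * x)‖ ≤ Real.exp (a * |ρ.im|) := by
  rw [norm_exp, Real.exp_le_exp]
  have hre : (I * ρ * x).re = -(ρ.im * x) := by simp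
  rw [hre]
  calc -(ρ.im * x) ≤ |ρ.im| * |x| := by rw [← abs_mul]; exact neg_le_abs _
    _ ≤ a * |ρ.im| := by rw [mul_comm a]; gcongr

lemma norm_integral_mul_cexp_le {a : ℝ} (ha : 0 ≤ a) {g : ℝ → ℂ}
    (hg : IntervalIntegrable g volume (-a) a) (ρ : ℂ) :
    ‖∫ x in (-a)..a, g x * cexp (I * ρ * x)‖ ≤
      (∫ x in (-a)..a, ‖g x‖) * Real.exp (a * |ρ.im|) := by
  rw [← intervalIntegral.integral_mul_const]
  refine intervalIntegral.norm_integral_le_of_norm_le (by linarith)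
    (Eventually.of_forall fun x hx => ?_) (hg.norm.mul_const _)
  rw [norm_mul]
  gcongr
  exact norm_cexp_I_mul_ofReal_le (abs_le.2 ⟨hx.1.le, hx.2⟩) ρ

lemma norm_integral_mul_cexp_le_div {a : ℝ} (ha : 0 ≤ a) {h : ℝ → ℂ} (hh : ContDiff ℝ 1 h)
    {ρ : ℂ} (hρ : ρ ≠ 0) :
    ‖∫ x in (-a)..a, h x * cexp (I * ρ * x)‖ ≤
      (‖h a‖ + ‖h (-a)‖ + ∫ x in (-a)..a, ‖deriv h x‖) * Real.exp (a * |ρ.im|) / ‖ρ‖ := by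
  have hIρ : I * ρ ≠ 0 := mul_ne_zero I_ne_zero hρ
  set E := Real.exp (a * |ρ.im|)
  set v : ℝ → ℂ := fun x => cexp (I * ρ * x) / (I * ρ)
  have hv : ∀ x : ℝ, HasDerivAt v (cexp (I * ρ * x)) x := fun x => by
    have := ((hasDerivAt_id (x : ℂ)).const_mul (I * ρ)).cexp.comp_ofReal.div_const (I * ρ)
    simpa [mul_div_cancel_right₀ _ hIρ] using this
  have hv_norm : ∀ x, |x| ≤ a → ‖v x‖ ≤ E / ‖ρ‖ := fun x hx => by
    simp only [v, norm_div, norm_mul, norm_I, one_mul]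
    gcongr
    exact norm_cexp_I_mul_ofReal_le hx ρ
  have hparts := intervalIntegral.integral_mul_deriv_eq_deriv_mul
    (fun x _ => (hh.differentiable one_ne_zero x).hasDerivAt) (fun x _ => hv x)
    ((hh.continuous_deriv le_rfl).intervalIntegrable _ _)
    ((by fun_prop : Continuous fun x : ℝ => cexp (I * ρ * x)).intervalIntegrable (-a) a)
  have hrest : ∫ x in (-a)..a, deriv h x * v x =
      (∫ x in (-a)..a, deriv h x * cexp (I * ρ * x)) / (I * ρ) := by
    simp only [v, ← mul_div_assoc, intervalIntegral.integral_div]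
  have hrest_norm : ‖∫ x in (-a)..a, deriv h x * v x‖ ≤
      (∫ x in (-a)..a, ‖deriv h x‖) * E / ‖ρ‖ := by
    rw [hrest, norm_div, norm_mul, norm_I, one_mul]
    gcongr
    exact norm_integral_mul_cexp_le ha ((hh.continuous_deriv le_rfl).intervalIntegrable _ _) ρ
  rw [hparts]
  calc ‖h a * v a - h (-a) * v (-a) - ∫ x in (-a)..a, deriv h x * v x‖
      ≤ ‖h a‖ * ‖v a‖ + ‖h (-a)‖ * ‖v (-a)‖ + ‖∫ x in (-a)..a, deriv h x * v x‖ := by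
        rw [← norm_mul, ← norm_mul]; exact norm_sub_le_of_le (norm_sub_le _ _) le_rfl
    _ ≤ ‖h a‖ * (E / ‖ρ‖) + ‖h (-a)‖ * (E / ‖ρ‖) +
          (∫ x in (-a)..a, ‖deriv h x‖) * E / ‖ρ‖ := by
        gcongr
        · exact hv_norm a (abs_of_nonneg ha).le
        · exact hv_norm (-a) (by rw [abs_neg, abs_of_nonneg ha])
    _ = _ := by ring

lemma MeasureTheory.IntegrableOn.exists_contDiff_setIntegral_norm_sub_le {E F : Type*}
    [NormedAddCommGroup E] [NormedSpace ℝ E] [FiniteDimensional ℝ E] [MeasurableSpace E]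
    [BorelSpace E] [NormedAddCommGroup F] [NormedSpace ℝ F] [CompleteSpace F]
    {μ : Measure E} [μ.Regular] {s : Set E} (hs : MeasurableSet s) (hμs : μ s ≠ ⊤)
    {f : E → F} (hf : IntegrableOn f s μ) {δ : ℝ} (hδ : 0 < δ) :
    ∃ h : E → F, ContDiff ℝ ∞ h ∧ ∫ x in s, ‖f x - h x‖ ∂μ ≤ δ := by
  obtain ⟨g, g_supp, hfg, g_cont, -⟩ :=
    (hf.integrable_indicator hs).exists_hasCompactSupport_integral_sub_le (half_pos hδ)
  set η := δ / (2 * (μ.real s + 1))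
  have hη : 0 < η := by positivity
  obtain ⟨h, h_smooth, hgh⟩ :=
    (g_supp.uniformContinuous_of_continuous g_cont).exists_contDiff_dist_le hη
  refine ⟨h, h_smooth, ?_⟩
  have hfg_int : Integrable (fun x => ‖s.indicator f x - g x‖) μ :=
    ((hf.integrable_indicator hs).sub (g_cont.integrable_of_hasCompactSupport g_supp)).norm
  have hpointwise : ∀ x ∈ s, ‖f x - h x‖ ≤ ‖s.indicator f x - g x‖ + η := fun x hx => by
    rw [indicator_of_mem hx]
    calc ‖f x - h x‖ ≤ ‖f x - g x‖ + ‖g x - h x‖ := norm_sub_le_norm_sub_add_norm_sub _ _ _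
      _ ≤ ‖f x - g x‖ + η := by
        gcongr
        rw [← dist_eq_norm, dist_comm]
        exact (hgh x).le
  calc ∫ x in s, ‖f x - h x‖ ∂μ ≤ ∫ x in s, (‖s.indicator f x - g x‖ + η) ∂μ :=
        integral_mono_of_nonneg (Eventually.of_forall fun _ => norm_nonneg _)
          (hfg_int.integrableOn.add (integrableOn_const hμs))
          ((ae_restrict_mem hs).mono hpointwise)
    _ = ∫ x in s, ‖s.indicator f x - g x‖ ∂μ + η * μ.real s := by
        rw [integral_add hfg_int.integrableOn (integrableOn_const hμs), setIntegral_const,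
          smul_eq_mul, mul_comm]
    _ ≤ δ / 2 + δ / 2 := by
        gcongr
        · exact (setIntegral_le_integral hfg_int
            (Eventually.of_forall fun _ => norm_nonneg _)).trans hfg
        · rw [div_mul_eq_mul_div, div_le_div_iff₀ (by positivity) two_pos]
          nlinarith [measureReal_nonneg (μ := μ) (s := s)]
    _ = δ := add_halves δ

lemma norm_integral_mul_cexp_le_add_div {a : ℝ} (ha : 0 ≤ a) {f h : ℝ → ℂ}
    (hf : IntervalIntegrable f volume (-a) a) (hh : ContDiff ℝ 1 h) {ρ : ℂ} (hρ : ρ ≠ 0) :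
    ‖∫ x in (-a)..a, f x * cexp (I * ρ * x)‖ ≤
      (∫ x in (-a)..a, ‖f x - h x‖) * Real.exp (a * |ρ.im|) +
        (‖h a‖ + ‖h (-a)‖ + ∫ x in (-a)..a, ‖deriv h x‖) * Real.exp (a * |ρ.im|) / ‖ρ‖ := by
  have hcexp : Continuous fun x : ℝ => cexp (I * ρ * x) := by fun_prop
  have hfh : IntervalIntegrable (fun x => f x - h x) volume (-a) a :=
    hf.sub (hh.continuous.intervalIntegrable _ _)
  have hsplit : ∫ x in (-a)..a, f x * cexp (I * ρ * x) =
      (∫ x in (-a)..a, (f x - h x) * cexp (I * ρ * x)) +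
        ∫ x in (-a)..a, h x * cexp (I * ρ * x) := by
    rw [← intervalIntegral.integral_add (hfh.mul_continuousOn hcexp.continuousOn)
      ((hh.continuous.intervalIntegrable _ _).mul_continuousOn hcexp.continuousOn)]
    simp only [sub_mul, sub_add_cancel]
  rw [hsplit]
  exact (norm_add_le _ _).trans
    (add_le_add (norm_integral_mul_cexp_le ha hfh ρ) (norm_integral_mul_cexp_le_div ha hh hρ))

/-- **Paley–Wiener growth estimate**: for `f ∈ L₂(-a, a)`, the entire function
`F(ρ) = ∫_{-a}^{a} f(x) e^{iρx} dx` satisfies `F(ρ) = o(e^{a|Im ρ|})` as `|ρ| → ∞`,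
uniformly with respect to `arg ρ`. -/
theorem paley_wiener_growth_estimate
    (a : ℝ) (ha : 0 < a) (f : ℝ → ℂ)
    (hf : MemLp f 2 (volume.restrict (Ioo (-a) a))) :
    ∀ ε : ℝ, 0 < ε → ∃ R : ℝ, 0 < R ∧
      ∀ ρ : ℂ, R ≤ ‖ρ‖ →
        ‖∫ x in (-a)..a, f x * Complex.exp (Complex.I * ρ * (x : ℂ))‖ ≤
          ε * Real.exp (a * |ρ.im|) := by
  intro ε hε
  have hf₁ : IntegrableOn f (Ioo (-a) a) := hf.integrable one_le_two
  obtain ⟨h, h_smooth, hfh⟩ := hf₁.exists_contDiff_setIntegral_norm_sub_le measurableSet_Ioo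
    measure_Ioo_lt_top.ne (half_pos hε)
  rw [← integral_Ioc_eq_integral_Ioo, ← intervalIntegral.integral_of_le (by linarith)] at hfh
  set C := ‖h a‖ + ‖h (-a)‖ + ∫ x in (-a)..a, ‖deriv h x‖
  refine ⟨max 1 (2 * C / ε), by positivity, fun ρ hρ => ?_⟩
  have hρ₀ : 0 < ‖ρ‖ := one_pos.trans_le ((le_max_left _ _).trans hρ)
  have hC : C / ‖ρ‖ ≤ ε / 2 := by
    have := (le_max_right _ _).trans hρ
    rw [div_le_iff₀ hε] at this
    rw [div_le_iff₀ hρ₀]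
    linarith
  calc _ ≤ (∫ x in (-a)..a, ‖f x - h x‖) * Real.exp (a * |ρ.im|) +
          C * Real.exp (a * |ρ.im|) / ‖ρ‖ :=
        norm_integral_mul_cexp_le_add_div ha.le
          ((intervalIntegrable_iff_integrableOn_Ioo_of_le (by linarith)).2 hf₁)
          (h_smooth.of_le (by exact_mod_cast le_top)) (norm_pos_iff.1 hρ₀)
    _ ≤ ε / 2 * Real.exp (a * |ρ.im|) + ε / 2 * Real.exp (a * |ρ.im|) := by
        rw [mul_div_right_comm]
        gcongr
    _ = ε * Real.exp (a * |ρ.im|) := by ring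
end

section
/- Boundedness of the matrix operator on the space of bounded sequences: Let V = {(n,i) : n ∈ ℕ, n ≥ 1, i ∈ {0,1}}, let ξ : ℕ → [0,∞) satisfy Σ_{k≥1} ξ_k² < ∞, and let A : V × V → ℂ be a matrix satisfying |A_{(n,i),(k,j)}| ≤ ξ_k/(|n − k| + 1) for all (n,i), (k,j) ∈ V. Then for every bounded sequence f ∈ ℓ^∞(V;ℂ) the series (Af)_{(n,i)} := Σ_{(k,j)∈V} A_{(n,i),(k,j)} f_{(k,j)} converges absolutely for every (n,i) ∈ V, the resulting map A : ℓ^∞(V;ℂ) → ℓ^∞(V;ℂ) is a bounded linear operator, and there is an absolute constant C > 0 (independent of ξ and A) such that ‖A‖ ≤ C (Σ_{k≥1} ξ_k²)^{1/2}. -/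
open Filter Topology

/-- The index set `V = {(n, i) : n ≥ 1, i ∈ {0, 1}}` (here `n : ℕ` stands for the
paper's index `n + 1`). -/
abbrev SeqIdx := ℕ × Fin 2

/-!
An infinite matrix whose absolute row sums are bounded by `M` acts on `ℓ^∞` with norm at most
`M`. Here the row `(n, i)` is dominated by `k ↦ ξ_k / (|n - k| + 1)`, counted once for each `j`,
and by Cauchy–Schwarz its sum is at most `‖ξ‖₂` times the `ℓ²` norm of `k ↦ 1 / (|n - k| + 1)`,
which is bounded uniformly in `n` by the sum over `ℤ`, namely `2 ζ(2) - 1 = π² / 3 - 1`.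
-/

open Real

theorem hasSum_one_div_abs_add_one_sq :
    HasSum (fun m : ℤ => 1 / (|(m : ℝ)| + 1) ^ 2) (π ^ 2 / 3 - 1) := by
  have hnat : HasSum (fun n : ℕ => 1 / (|((n : ℤ) : ℝ)| + 1) ^ 2) (π ^ 2 / 6) := by
    simpa using (hasSum_nat_add_iff' 1).2 hasSum_zeta_two
  have hneg : HasSum (fun n : ℕ => 1 / (|((-(n + 1) : ℤ) : ℝ)| + 1) ^ 2) (π ^ 2 / 6 - 1) := by
    have h : HasSum (fun n : ℕ => 1 / ((n : ℝ) + 2) ^ 2) (π ^ 2 / 6 - 1) := by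
      simpa [Finset.sum_range_succ] using (hasSum_nat_add_iff' 2).2 hasSum_zeta_two
    refine h.congr_fun fun n => ?_
    rw [abs_of_nonpos (by push_cast; linarith [n.cast_nonneg (α := ℝ)])]
    push_cast
    ring
  have := HasSum.of_nat_of_neg_add_one (f := fun m : ℤ => 1 / (|(m : ℝ)| + 1) ^ 2) hnat hneg
  rwa [show π ^ 2 / 6 + (π ^ 2 / 6 - 1) = π ^ 2 / 3 - 1 by ring] at this

theorem summable_one_div_abs_sub_add_one_sq (n : ℕ) :
    Summable fun k : ℕ => 1 / (|(n : ℝ) - k| + 1) ^ 2 := by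
  have hinj : Function.Injective fun k : ℕ => (n : ℤ) - k := fun a b h => by simpa using h
  simpa [Function.comp_def] using hasSum_one_div_abs_add_one_sq.summable.comp_injective hinj

theorem tsum_one_div_abs_sub_add_one_sq_le (n : ℕ) :
    ∑' k : ℕ, 1 / (|(n : ℝ) - k| + 1) ^ 2 ≤ π ^ 2 / 3 - 1 := by
  have hinj : Function.Injective fun k : ℕ => (n : ℤ) - k := fun a b h => by simpa using h
  rw [← hasSum_one_div_abs_add_one_sq.tsum_eq]
  simpa [Function.comp_def] using
    tsum_comp_le_tsum_of_inj hasSum_one_div_abs_add_one_sq.summable (fun m => by positivity) hinj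

theorem HasSum.comp_fst {α ι M : Type*} [AddCommMonoid M] [TopologicalSpace M] [ContinuousAdd M]
    [Fintype ι] {g : α → M} {a : M} (hg : HasSum g a) :
    HasSum (fun w : α × ι => g w.1) (Fintype.card ι • a) := by
  classical
  have hslice (j : ι) : HasSum (fun w : α × ι => if w.2 = j then g w.1 else 0) a := by
    refine (Function.Injective.hasSum_iff (g := fun k => (k, j))
      (fun _ _ h => (Prod.ext_iff.1 h).1) ?_).1 (by simpa [Function.comp_def] using hg)
    rintro ⟨k, i⟩ hki
    simp only [Set.mem_range, Prod.mk.injEq, not_exists, not_and] at hki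
    simp only [ite_eq_right_iff]
    exact fun h => absurd h.symm (hki k rfl)
  simpa using hasSum_sum fun j (_ : j ∈ Finset.univ) => hslice j

theorem summable_mul_and_tsum_mul_le_sqrt_mul_sqrt {ι : Type*} {f g : ι → ℝ}
    (hf : ∀ i, 0 ≤ f i) (hg : ∀ i, 0 ≤ g i)
    (hf₂ : Summable fun i => f i ^ 2) (hg₂ : Summable fun i => g i ^ 2) :
    (Summable fun i => f i * g i) ∧
      ∑' i, f i * g i ≤ √(∑' i, f i ^ 2) * √(∑' i, g i ^ 2) := by
  have := summable_and_inner_le_Lp_mul_Lq_tsum_of_nonneg .two_two hf hg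
    (by simpa only [rpow_two] using hf₂) (by simpa only [rpow_two] using hg₂)
  simpa only [rpow_two, sqrt_eq_rpow] using this

theorem summable_and_tsum_le_of_norm_le_div_abs_sub_add_one {ι E : Type*} [Fintype ι]
    [SeminormedAddCommGroup E] {ξ : ℕ → ℝ} (hξ : ∀ k, 0 ≤ ξ k) (hξ₂ : Summable fun k => ξ k ^ 2)
    {n : ℕ} {a : ℕ × ι → E} (ha : ∀ w, ‖a w‖ ≤ ξ w.1 / (|(n : ℝ) - w.1| + 1)) :
    (Summable fun w => ‖a w‖) ∧
      ∑' w, ‖a w‖ ≤ Fintype.card ι * √(π ^ 2 / 3 - 1) * √(∑' k, ξ k ^ 2) := by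
  set d : ℕ → ℝ := fun k => 1 / (|(n : ℝ) - k| + 1)
  have hd₂ : (fun k => d k ^ 2) = fun k : ℕ => 1 / (|(n : ℝ) - k| + 1) ^ 2 := by
    simp only [d, one_div_pow]
  obtain ⟨hsum, hle⟩ := summable_mul_and_tsum_mul_le_sqrt_mul_sqrt hξ
    (fun k => by positivity) hξ₂ (hd₂ ▸ summable_one_div_abs_sub_add_one_sq n)
  have hmaj : HasSum (fun w : ℕ × ι => ξ w.1 * d w.1) (Fintype.card ι • ∑' k, ξ k * d k) :=
    hsum.hasSum.comp_fst
  have hmaj_le (w : ℕ × ι) : ‖a w‖ ≤ ξ w.1 * d w.1 := by simpa only [d, mul_one_div] using ha w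
  have hnorm : Summable fun w => ‖a w‖ :=
    hmaj.summable.of_nonneg_of_le (fun _ => norm_nonneg _) hmaj_le
  refine ⟨hnorm, ?_⟩
  have hd_le : √(∑' k, d k ^ 2) ≤ √(π ^ 2 / 3 - 1) := by
    rw [hd₂]; exact sqrt_le_sqrt (tsum_one_div_abs_sub_add_one_sq_le n)
  calc ∑' w, ‖a w‖ ≤ ∑' w : ℕ × ι, ξ w.1 * d w.1 := hnorm.tsum_le_tsum hmaj_le hmaj.summable
    _ = Fintype.card ι * ∑' k, ξ k * d k := by rw [hmaj.tsum_eq, nsmul_eq_mul]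
    _ ≤ Fintype.card ι * (√(∑' k, ξ k ^ 2) * √(π ^ 2 / 3 - 1)) := by
        gcongr
        exact hle.trans (mul_le_mul_of_nonneg_left hd_le (sqrt_nonneg _))
    _ = Fintype.card ι * √(π ^ 2 / 3 - 1) * √(∑' k, ξ k ^ 2) := by ring

section LinftyMatrix

variable {𝕜 ι κ : Type*} [NontriviallyNormedField 𝕜]

theorem summable_norm_mul_of_norm_le {a f : κ → 𝕜} {B : ℝ} (ha : Summable fun w => ‖a w‖)
    (hf : ∀ w, ‖f w‖ ≤ B) : Summable fun w => ‖a w * f w‖ :=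
  (ha.mul_right B).of_nonneg_of_le (fun _ => norm_nonneg _) fun w => by
    rw [norm_mul]; exact mul_le_mul_of_nonneg_left (hf w) (norm_nonneg _)

theorem norm_tsum_mul_le {a f : κ → 𝕜} {B : ℝ} (ha : Summable fun w => ‖a w‖)
    (hf : ∀ w, ‖f w‖ ≤ B) : ‖∑' w, a w * f w‖ ≤ (∑' w, ‖a w‖) * B :=
  calc ‖∑' w, a w * f w‖ ≤ ∑' w, ‖a w * f w‖ :=
        norm_tsum_le_tsum_norm (summable_norm_mul_of_norm_le ha hf)
    _ ≤ ∑' w, ‖a w‖ * B := by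
        refine (summable_norm_mul_of_norm_le ha hf).tsum_le_tsum (fun w => ?_) (ha.mul_right B)
        rw [norm_mul]; exact mul_le_mul_of_nonneg_left (hf w) (norm_nonneg _)
    _ = (∑' w, ‖a w‖) * B := tsum_mul_right

theorem exists_lp_infty_clm_of_tsum_norm_le [CompleteSpace 𝕜] {A : ι → κ → 𝕜} {M : ℝ} (hM : 0 ≤ M)
    (hA : ∀ v, Summable fun w => ‖A v w‖) (hAM : ∀ v, ∑' w, ‖A v w‖ ≤ M) :
    ∃ T : lp (fun _ : κ => 𝕜) ⊤ →L[𝕜] lp (fun _ : ι => 𝕜) ⊤,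
      (∀ f v, T f v = ∑' w, A v w * f w) ∧ ‖T‖ ≤ M := by
  have hsum (f : lp (fun _ : κ => 𝕜) ⊤) (v : ι) : Summable fun w => A v w * f w :=
    (summable_norm_mul_of_norm_le (hA v) (lp.norm_apply_le_norm ENNReal.top_ne_zero f)).of_norm
  have hbound (f : lp (fun _ : κ => 𝕜) ⊤) (v : ι) : ‖∑' w, A v w * f w‖ ≤ M * ‖f‖ :=
    (norm_tsum_mul_le (hA v) (lp.norm_apply_le_norm ENNReal.top_ne_zero f)).trans
      (mul_le_mul_of_nonneg_right (hAM v) (norm_nonneg f))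
  let L : lp (fun _ : κ => 𝕜) ⊤ →ₗ[𝕜] lp (fun _ : ι => 𝕜) ⊤ :=
    { toFun f := ⟨fun v => ∑' w, A v w * f w,
        memℓp_infty ⟨M * ‖f‖, Set.forall_mem_range.2 (hbound f)⟩⟩
      map_add' f g := by
        ext v
        simpa only [lp.coeFn_add, Pi.add_apply, mul_add] using (hsum f v).tsum_add (hsum g v)
      map_smul' c f := by
        ext v
        simpa [mul_left_comm] using tsum_mul_left (a := c) (f := fun w => A v w * f w) }
  exact ⟨L.mkContinuous M fun f => lp.norm_le_of_forall_le (by positivity) (hbound f),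
    fun _ _ => rfl, L.mkContinuous_norm_le hM _⟩

end LinftyMatrix

/-- **Boundedness of the matrix operator on `ℓ^∞(V; ℂ)`**: if `|A_{(n,i),(k,j)}| ≤
ξ_k / (|n - k| + 1)` with `Σ ξ_k² < ∞`, then `A` acts on bounded sequences by absolutely
convergent series, defines a bounded linear operator on `ℓ^∞(V; ℂ)`, and
`‖A‖ ≤ C (Σ ξ_k²)^{1/2}` for an absolute constant `C`. -/
theorem matrix_operator_bounded :
    ∃ C : ℝ, 0 < C ∧
      ∀ (ξ : ℕ → ℝ) (A : SeqIdx → SeqIdx → ℂ),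
        (∀ k, 0 ≤ ξ k) → Summable (fun k => ξ k ^ 2) →
        (∀ v w : SeqIdx, ‖A v w‖ ≤ ξ w.1 / (|(v.1 : ℝ) - (w.1 : ℝ)| + 1)) →
        (∀ f : SeqIdx → ℂ, (∃ B : ℝ, ∀ v, ‖f v‖ ≤ B) →
          ∀ v : SeqIdx, Summable (fun w : SeqIdx => ‖A v w * f w‖)) ∧
        ∃ T : lp (fun _ : SeqIdx => ℂ) ⊤ →L[ℂ] lp (fun _ : SeqIdx => ℂ) ⊤,
          (∀ (f : lp (fun _ : SeqIdx => ℂ) ⊤) (v : SeqIdx),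
            T f v = ∑' w : SeqIdx, A v w * f w) ∧
          ‖T‖ ≤ C * Real.sqrt (∑' k, ξ k ^ 2) := by
  refine ⟨2 * √(π ^ 2 / 3 - 1), mul_pos two_pos (sqrt_pos.2 (by nlinarith [pi_gt_three])),
    fun ξ A hξ hξ₂ hA => ?_⟩
  have hrow (v : SeqIdx) := summable_and_tsum_le_of_norm_le_div_abs_sub_add_one hξ hξ₂ (hA v)
  simp only [Fintype.card_fin, Nat.cast_ofNat] at hrow
  refine ⟨fun f ⟨B, hB⟩ v => summable_norm_mul_of_norm_le (hrow v).1 hB, ?_⟩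
  exact exists_lp_infty_clm_of_tsum_norm_le (by positivity) (fun v => (hrow v).1)
    fun v => (hrow v).2
end

section
/- Compactness of the matrix operator on the space of bounded sequences: Let V = {(n,i) : n ∈ ℕ, n ≥ 1, i ∈ {0,1}}, let ξ : ℕ → [0,∞) satisfy Σ_{k≥1} ξ_k² < ∞, and let A : V × V → ℂ satisfy |A_{(n,i),(k,j)}| ≤ ξ_k/(|n − k| + 1) for all (n,i), (k,j) ∈ V. Then the bounded linear operator on ℓ^∞(V;ℂ) defined by (Af)_{(n,i)} = Σ_{(k,j)∈V} A_{(n,i),(k,j)} f_{(k,j)} is a compact operator. -/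
open Filter Topology

/-!
By Cauchy–Schwarz, the `ℓ¹` norm of row `(n, i)` of `A` over any set of columns with first
coordinates in `K` is at most `2 (∑_{k ∈ K} ξ_k²)^{1/2} (∑_{z ∈ ℤ} (|z| + 1)⁻²)^{1/2}`, uniformly
in the row. Hence the rows are uniformly bounded in `ℓ¹`, so `A` acts boundedly on `ℓ^∞`, and their
tails are uniformly small, so the truncations of `A` to finitely many columns are finite-rank
operators converging to `A` in operator norm. A norm limit of compact operators is compact.
-/

open Finset
open scoped lp ENNReal

section MatrixOperator

variable {α ι 𝕜 : Type*} [RCLike 𝕜]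

theorem norm_tsum_mul_le_of_sum_norm_le {b f : α → 𝕜} {C K : ℝ}
    (hb : ∀ t : Finset α, ∑ a ∈ t, ‖b a‖ ≤ C) (hf : ∀ a, ‖f a‖ ≤ K) (hK : 0 ≤ K) :
    ‖∑' a, b a * f a‖ ≤ C * K := by
  have hb' : Summable (‖b ·‖) := summable_of_sum_le (fun _ => norm_nonneg _) hb
  calc ‖∑' a, b a * f a‖ ≤ ∑' a, ‖b a‖ * K :=
        tsum_of_norm_bounded (hb'.mul_right K).hasSum fun a => by
          rw [norm_mul]; exact mul_le_mul_of_nonneg_left (hf a) (norm_nonneg _)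
    _ = (∑' a, ‖b a‖) * K := tsum_mul_right
    _ ≤ C * K := by gcongr; exact hb'.tsum_le_of_sum_le hb

theorem summable_mul_of_sum_norm_le {b f : α → 𝕜} {C K : ℝ}
    (hb : ∀ t : Finset α, ∑ a ∈ t, ‖b a‖ ≤ C) (hf : ∀ a, ‖f a‖ ≤ K) :
    Summable fun a => b a * f a :=
  .of_norm_bounded ((summable_of_sum_le (fun _ => norm_nonneg _) hb).mul_right K) fun a => by
    rw [norm_mul]; exact mul_le_mul_of_nonneg_left (hf a) (norm_nonneg _)

namespace lp

theorem summable_matrix_mul {B : ι → ι → 𝕜} {C : ℝ}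
    (hB : ∀ v (t : Finset ι), ∑ w ∈ t, ‖B v w‖ ≤ C) (v : ι) (f : ℓ^∞(ι, 𝕜)) :
    Summable fun w => B v w * f w :=
  summable_mul_of_sum_norm_le (hB v) (norm_apply_le_norm ENNReal.top_ne_zero f)

theorem norm_tsum_matrix_mul_le {B : ι → ι → 𝕜} {C : ℝ}
    (hB : ∀ v (t : Finset ι), ∑ w ∈ t, ‖B v w‖ ≤ C) (v : ι) (f : ℓ^∞(ι, 𝕜)) :
    ‖∑' w, B v w * f w‖ ≤ C * ‖f‖ :=
  norm_tsum_mul_le_of_sum_norm_le (hB v) (norm_apply_le_norm ENNReal.top_ne_zero f)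
    (norm_nonneg f)

variable (B : ι → ι → 𝕜) {C : ℝ} (hB : ∀ v (t : Finset ι), ∑ w ∈ t, ‖B v w‖ ≤ C)

noncomputable def matrixCLM : ℓ^∞(ι, 𝕜) →L[𝕜] ℓ^∞(ι, 𝕜) :=
  LinearMap.mkContinuousOfExistsBound
    { toFun f := ⟨fun v => ∑' w, B v w * f w, memℓp_infty ⟨C * ‖f‖, by
        rintro _ ⟨v, rfl⟩; exact norm_tsum_matrix_mul_le hB v f⟩⟩
      map_add' f g := lp.ext <| funext fun v => by
        simp only [coeFn_add, Pi.add_apply, mul_add]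
        exact (summable_matrix_mul hB v f).tsum_add (summable_matrix_mul hB v g)
      map_smul' c f := lp.ext <| funext fun v => by
        simp only [coeFn_smul, Pi.smul_apply, smul_eq_mul, mul_left_comm _ c]
        exact tsum_mul_left }
    -- `C` itself may be negative when `ι` is empty
    ⟨max C 0, fun f => norm_le_of_forall_le (by positivity) fun v =>
      (norm_tsum_matrix_mul_le hB v f).trans (by gcongr; exact le_max_left C 0)⟩

theorem matrixCLM_apply (f : ℓ^∞(ι, 𝕜)) (v : ι) : matrixCLM B hB f v = ∑' w, B v w * f w := rfl

noncomputable def matrixColumn (w : ι) : ℓ^∞(ι, 𝕜) :=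
  ⟨fun v => B v w, memℓp_infty ⟨C, by rintro _ ⟨v, rfl⟩; simpa using hB v {w}⟩⟩

noncomputable def matrixTruncation (s : Finset ι) : ℓ^∞(ι, 𝕜) →L[𝕜] ℓ^∞(ι, 𝕜) :=
  ∑ w ∈ s, (evalCLM 𝕜 (fun _ => 𝕜) ∞ w).smulRight (matrixColumn B hB w)

theorem isCompactOperator_matrixTruncation (s : Finset ι) :
    IsCompactOperator (matrixTruncation B hB s) :=
  (compactOperator (RingHom.id 𝕜) ℓ^∞(ι, 𝕜) ℓ^∞(ι, 𝕜)).sum_mem fun w _ =>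
    (isCompactOperator_of_locallyCompactSpace_dom (evalCLM 𝕜 (fun _ => 𝕜) ∞ w)).clm_comp
      (ContinuousLinearMap.toSpanSingleton 𝕜 (matrixColumn B hB w))

theorem matrixCLM_sub_matrixTruncation_apply (s : Finset ι) (f : ℓ^∞(ι, 𝕜)) (v : ι) :
    (matrixCLM B hB - matrixTruncation B hB s) f v = ∑' w : ↑(↑s : Set ι)ᶜ, B v w * f w := by
  rw [← add_sub_cancel_left (∑ w ∈ s, B v w * f w) (∑' w : ↑(↑s : Set ι)ᶜ, B v w * f w),
    (summable_matrix_mul hB v f).sum_add_tsum_compl]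
  simp only [matrixTruncation, evalCLM, matrixColumn, sub_apply, _root_.sum_apply,
    ContinuousLinearMap.smulRight_apply, LinearMap.mkContinuous_apply, evalₗ_apply,
    AddSubgroupClass.coe_sub, AddSubgroup.val_finsetSum, coeFn_smul, PreLp.sub_apply,
    matrixCLM_apply, sub_right_inj]
  exact (Finset.sum_apply v s _).trans (sum_congr rfl fun w _ => mul_comm _ _)

theorem norm_matrixCLM_sub_matrixTruncation_le (s : Finset ι) {ε : ℝ} (hε : 0 ≤ ε)
    (htail : ∀ v (t : Finset ι), Disjoint t s → ∑ w ∈ t, ‖B v w‖ ≤ ε) :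
    ‖matrixCLM B hB - matrixTruncation B hB s‖ ≤ ε := by
  refine ContinuousLinearMap.opNorm_le_bound _ hε fun f =>
    norm_le_of_forall_le (by positivity) fun v => ?_
  have htail' (t : Finset ↑(↑s : Set ι)ᶜ) : ∑ w ∈ t, ‖B v w‖ ≤ ε := by
    refine (sum_map t (Function.Embedding.subtype _) (fun w => ‖B v w‖)).symm.trans_le
      (htail v _ (disjoint_left.2 fun w hw hws => ?_))
    obtain ⟨x, -, rfl⟩ := mem_map.1 hw
    exact x.2 hws
  rw [matrixCLM_sub_matrixTruncation_apply]
  exact norm_tsum_mul_le_of_sum_norm_le htail'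
    (fun w => norm_apply_le_norm ENNReal.top_ne_zero f w) (norm_nonneg f)

theorem isCompactOperator_matrixCLM
    (htail : ∀ ε > 0, ∃ s : Finset ι, ∀ v (t : Finset ι), Disjoint t s → ∑ w ∈ t, ‖B v w‖ ≤ ε) :
    IsCompactOperator (matrixCLM B hB) := by
  -- instance search does not find this within the default budget
  have : T2Space ℓ^∞(ι, 𝕜) := TopologicalSpace.t2Space_of_metrizableSpace
  refine isClosed_setOfPred_isCompactOperator.closure_subset
    (Metric.mem_closure_iff.2 fun ε hε => ?_)
  obtain ⟨s, hs⟩ := htail (ε / 2) (half_pos hε)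
  refine ⟨_, isCompactOperator_matrixTruncation B hB s, ?_⟩
  rw [dist_eq_norm]
  exact (norm_matrixCLM_sub_matrixTruncation_le B hB s (half_pos hε).le hs).trans_lt
    (half_lt_self hε)

end lp

end MatrixOperator

theorem Finset.sum_comp_fst_le_card_mul {α κ : Type*} [DecidableEq α] [Fintype κ] {g : α → ℝ}
    (hg : ∀ a, 0 ≤ g a) (t : Finset (α × κ)) :
    ∑ w ∈ t, g w.1 ≤ Fintype.card κ * ∑ a ∈ t.image Prod.fst, g a := by
  calc ∑ w ∈ t, g w.1 ≤ ∑ w ∈ t.image Prod.fst ×ˢ univ, g w.1 :=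
        sum_le_sum_of_subset_of_nonneg (fun w hw => mem_product.2 ⟨mem_image_of_mem _ hw,
          mem_univ _⟩) fun w _ _ => hg w.1
    _ = Fintype.card κ * ∑ a ∈ t.image Prod.fst, g a := by
        rw [sum_product, mul_sum]; simp

theorem summable_one_div_abs_add_one_sq : Summable fun z : ℤ => (1 / (|(z : ℝ)| + 1)) ^ 2 := by
  have h : Summable fun n : ℕ => (1 / ((n : ℝ) + 1)) ^ 2 := by
    simpa [div_pow] using (summable_nat_add_iff 1).2 (Real.summable_one_div_nat_pow.2 one_lt_two)
  exact .of_nat_of_neg (by simpa using h) (by simpa using h)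

theorem sum_one_div_abs_sub_add_one_sq_le (n : ℕ) (u : Finset ℕ) :
    ∑ k ∈ u, (1 / (|(n : ℝ) - k| + 1)) ^ 2 ≤ ∑' z : ℤ, (1 / (|(z : ℝ)| + 1)) ^ 2 := by
  have hinj : Set.InjOn (fun k : ℕ => (n : ℤ) - k) u := fun a _ b _ h => by simpa using h
  calc ∑ k ∈ u, (1 / (|(n : ℝ) - k| + 1)) ^ 2
      = ∑ z ∈ u.image fun k : ℕ => (n : ℤ) - k, (1 / (|(z : ℝ)| + 1)) ^ 2 := by
        rw [sum_image hinj]; push_cast; rfl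
    _ ≤ _ := summable_one_div_abs_add_one_sq.sum_le_tsum _ fun _ _ => by positivity

theorem sum_div_abs_sub_add_one_le (ξ : ℕ → ℝ) (n : ℕ) (u : Finset ℕ) :
    ∑ k ∈ u, ξ k / (|(n : ℝ) - k| + 1) ≤
      √(∑ k ∈ u, ξ k ^ 2) * √(∑' z : ℤ, (1 / (|(z : ℝ)| + 1)) ^ 2) := by
  simp_rw [div_eq_mul_one_div (ξ _)]
  exact (Real.sum_mul_le_sqrt_mul_sqrt _ _ _).trans
    (by gcongr; exact sum_one_div_abs_sub_add_one_sq_le n u)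

theorem exists_sum_div_abs_sub_add_one_le {ξ : ℕ → ℝ} (hξ : Summable fun k => ξ k ^ 2) {ε : ℝ}
    (hε : 0 < ε) : ∃ s : Finset ℕ, ∀ (n : ℕ) (u : Finset ℕ), Disjoint u s →
      ∑ k ∈ u, ξ k / (|(n : ℝ) - k| + 1) ≤ ε := by
  set M := ∑' z : ℤ, (1 / (|(z : ℝ)| + 1)) ^ 2
  have hδ : 0 < (ε / (√M + 1)) ^ 2 := by positivity
  obtain ⟨s, hs⟩ := hξ.vanishing (Iio_mem_nhds hδ)
  refine ⟨s, fun n u hu => (sum_div_abs_sub_add_one_le ξ n u).trans ?_⟩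
  calc √(∑ k ∈ u, ξ k ^ 2) * √M ≤ ε / (√M + 1) * √M := by
        gcongr
        exact (Real.sqrt_le_left (by positivity)).2 (hs u hu).le
    _ ≤ ε := by
        rw [div_mul_eq_mul_div, div_le_iff₀ (by positivity)]; nlinarith [Real.sqrt_nonneg M]

/-- **Compactness of the matrix operator on `ℓ^∞(V; ℂ)`**: if `|A_{(n,i),(k,j)}| ≤
ξ_k / (|n - k| + 1)` with `Σ ξ_k² < ∞`, then the associated bounded linear operator
`(Af)_{(n,i)} = Σ_{(k,j)} A_{(n,i),(k,j)} f_{(k,j)}` on `ℓ^∞(V; ℂ)` is compact. -/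
theorem matrix_operator_compact
    (ξ : ℕ → ℝ) (A : SeqIdx → SeqIdx → ℂ)
    (hξ0 : ∀ k, 0 ≤ ξ k) (hξ : Summable (fun k => ξ k ^ 2))
    (hA : ∀ v w : SeqIdx, ‖A v w‖ ≤ ξ w.1 / (|(v.1 : ℝ) - (w.1 : ℝ)| + 1)) :
    ∃ T : lp (fun _ : SeqIdx => ℂ) ⊤ →L[ℂ] lp (fun _ : SeqIdx => ℂ) ⊤,
      (∀ (f : lp (fun _ : SeqIdx => ℂ) ⊤) (v : SeqIdx),
        T f v = ∑' w : SeqIdx, A v w * f w) ∧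
      IsCompactOperator (⇑T) := by
  have hrow (v : SeqIdx) (t : Finset SeqIdx) :
      ∑ w ∈ t, ‖A v w‖ ≤ 2 * ∑ k ∈ t.image Prod.fst, ξ k / (|(v.1 : ℝ) - k| + 1) := by
    refine (sum_le_sum fun w _ => hA v w).trans ?_
    simpa using sum_comp_fst_le_card_mul
      (g := fun k : ℕ => ξ k / (|(v.1 : ℝ) - k| + 1)) (fun k => by have := hξ0 k; positivity) t
  have hB (v : SeqIdx) (t : Finset SeqIdx) : ∑ w ∈ t, ‖A v w‖ ≤
      2 * (√(∑' k, ξ k ^ 2) * √(∑' z : ℤ, (1 / (|(z : ℝ)| + 1)) ^ 2)) := by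
    refine (hrow v t).trans ?_
    gcongr
    refine (sum_div_abs_sub_add_one_le ξ v.1 _).trans ?_
    gcongr
    exact hξ.sum_le_tsum _ fun _ _ => sq_nonneg _
  refine ⟨lp.matrixCLM A hB, lp.matrixCLM_apply A hB,
    lp.isCompactOperator_matrixCLM A hB fun ε hε => ?_⟩
  obtain ⟨s, hs⟩ := exists_sum_div_abs_sub_add_one_le hξ (half_pos hε)
  refine ⟨s ×ˢ univ, fun v t ht => (hrow v t).trans ?_⟩
  have hdisj : Disjoint (t.image Prod.fst) s := by
    refine disjoint_left.2 fun k hk hks => ?_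
    obtain ⟨w, hw, rfl⟩ := mem_image.1 hk
    exact disjoint_left.1 ht hw (mem_product.2 ⟨hks, mem_univ _⟩)
  linarith [hs v.1 _ hdisj]
end

section
/- Continuous dependence of the solution on the potential: Let σ_m (m ≥ 1) and σ belong to L₂((0,π);ℂ) with ‖σ_m − σ‖_{L₂(0,π)} → 0 as m → ∞. For each λ ∈ ℂ let (φ_m(·,λ), u_m(·,λ)) be the solution of the Sturm–Liouville equation with potential σ_m′ satisfying φ_m(0,λ) = 1, u_m(0,λ) = 0, and let (φ(·,λ), u(·,λ)) be the solution with potential σ′ satisfying φ(0,λ) = 1, u(0,λ) = 0. Then for every R > 0, sup { |φ_m(x,λ) − φ(x,λ)| + |u_m(x,λ) − u(x,λ)| : x ∈ [0,π], λ ∈ ℂ, |λ| ≤ R } → 0 as m → ∞. -/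
open MeasureTheory Set Filter Topology

/-! The differences `φ_m - φ`, `u_m - u` satisfy a linear Volterra system whose coefficient is
bounded by `1 + R + |σ_m| + |σ_m|²` and whose inhomogeneity is bounded by
`|σ_m - σ| (1 + |σ_m| + |σ|)` times an a priori bound for `(φ, u)`. A Grönwall inequality with an
`L¹` weight (the bound at most doubles across each stretch on which the weight has mass `1 / 2`)
bounds the differences by the integral of the inhomogeneity, which tends to zero by Cauchy–Schwarz
since `σ_m → σ` in `L₂`. The a priori bound is the same estimate comparing `(φ, u)` with the zero
solution. -/

/-- The branch of the square root with argument in `[-π/2, π/2)`. -/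
noncomputable def csqrt (z : ℂ) : ℂ :=
  if (z ^ (2⁻¹ : ℂ)).arg = Real.pi / 2 then -(z ^ (2⁻¹ : ℂ)) else z ^ (2⁻¹ : ℂ)

/-- `y` together with its quasi-derivative `u` solves the Sturm–Liouville equation
`ℓ y = λ y` on `[0, π]` with singular potential `q = σ'`. -/
def IsSLSol (σ : ℝ → ℂ) (lam : ℂ) (y u : ℝ → ℂ) : Prop :=
  ContinuousOn y (Icc 0 Real.pi) ∧ ContinuousOn u (Icc 0 Real.pi) ∧
    ∀ x ∈ Icc (0 : ℝ) Real.pi,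
      y x = y 0 + ∫ t in (0 : ℝ)..x, (u t + σ t * y t) ∧
      u x = u 0 - ∫ t in (0 : ℝ)..x, (σ t * u t + σ t ^ 2 * y t + lam * y t)

/-- The normalization class `𝒩` of pairs of coprime polynomials: either `r₁` is monic with
`deg r₂ ≤ deg r₁` (case I) or `r₂` is monic with `deg r₁ < deg r₂` (case II). -/
def ClassN (r₁ r₂ : Polynomial ℂ) : Prop :=
  IsCoprime r₁ r₂ ∧
    ((r₁.Monic ∧ r₂.natDegree ≤ r₁.natDegree) ∨ (r₂.Monic ∧ r₁.natDegree < r₂.natDegree))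

section IntervalL2

variable {𝕜 : Type*} [RCLike 𝕜] {a b : ℝ}

theorem intervalIntegrable_of_memLp_two {f : ℝ → 𝕜} (hab : a ≤ b)
    (hf : MemLp f 2 (volume.restrict (Ioo a b))) : IntervalIntegrable f volume a b :=
  (intervalIntegrable_iff_integrableOn_Ioo_of_le hab).2 (hf.integrable one_le_two)

theorem intervalIntegrable_mul_of_memLp_two {f g : ℝ → 𝕜} (hab : a ≤ b)
    (hf : MemLp f 2 (volume.restrict (Ioo a b))) (hg : MemLp g 2 (volume.restrict (Ioo a b))) :
    IntervalIntegrable (fun t => f t * g t) volume a b :=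
  (intervalIntegrable_iff_integrableOn_Ioo_of_le hab).2 (hf.integrable_mul hg)

end IntervalL2

theorem tendsto_integral_norm_sub_mul_of_tendsto_eLpNorm {α E : Type*} [MeasurableSpace α]
    {μ : Measure α} [IsFiniteMeasure μ] [NormedAddCommGroup E] {f : ℕ → α → E} {g : α → E}
    (hf : ∀ m, MemLp (f m) 2 μ) (hg : MemLp g 2 μ)
    (hfg : Tendsto (fun m => eLpNorm (fun a => f m a - g a) 2 μ) atTop (𝓝 0)) :
    Tendsto (fun m => ∫ a, ‖f m a - g a‖ * (1 + ‖f m a‖ + ‖g a‖) ∂μ) atTop (𝓝 0) := by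
  set N : (α → ℝ) → ℝ := fun h => (∫ a, ‖h a‖ ^ (2 : ℝ) ∂μ) ^ (1 / 2 : ℝ)
  have hdiff : ∀ m, MemLp (fun a => f m a - g a) 2 μ := fun m => (hf m).sub hg
  have hw : MemLp (fun a => 1 + 2 * ‖g a‖) 2 μ :=
    (memLp_const (1 : ℝ)).add (hg.norm.const_mul (2 : ℝ))
  have hN : Tendsto (fun m => N fun a => ‖f m a - g a‖) atTop (𝓝 0) := by
    refine ((ENNReal.tendsto_toReal ENNReal.zero_ne_top).comp hfg).congr fun m => ?_
    simp only [Function.comp_apply, (hdiff m).eLpNorm_eq_integral_rpow_norm two_ne_zero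
      ENNReal.ofNat_ne_top, N, norm_norm]
    rw [ENNReal.toReal_ofReal (by positivity)]
    norm_num
  have holder : ∀ {h₁ h₂ : α → ℝ}, MemLp h₁ 2 μ → MemLp h₂ 2 μ →
      ∫ a, ‖h₁ a‖ * ‖h₂ a‖ ∂μ ≤ N h₁ * N h₂ := fun h₁ h₂ =>
    integral_mul_norm_le_Lp_mul_Lq Real.HolderConjugate.two_two (by simpa using h₁)
      (by simpa using h₂)
  have hintegrable : ∀ {h₁ h₂ : α → ℝ}, MemLp h₁ 2 μ → MemLp h₂ 2 μ →
      Integrable (fun a => ‖h₁ a‖ * ‖h₂ a‖) μ := fun h₁ h₂ => h₁.norm.integrable_mul h₂.norm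
  have hbound : ∀ m, ∫ a, ‖f m a - g a‖ * (1 + ‖f m a‖ + ‖g a‖) ∂μ ≤
      N (fun a => ‖f m a - g a‖) * N (fun a => 1 + 2 * ‖g a‖) +
        N (fun a => ‖f m a - g a‖) * N (fun a => ‖f m a - g a‖) := by
    intro m
    have hd := (hdiff m).norm
    calc ∫ a, ‖f m a - g a‖ * (1 + ‖f m a‖ + ‖g a‖) ∂μ
        ≤ ∫ a, (‖‖f m a - g a‖‖ * ‖1 + 2 * ‖g a‖‖ + ‖‖f m a - g a‖‖ * ‖‖f m a - g a‖‖) ∂μ := by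
          refine integral_mono_of_nonneg (ae_of_all _ fun a => by positivity)
            ((hintegrable hd hw).add (hintegrable hd hd)) (ae_of_all _ fun a => ?_)
          have : ‖f m a‖ ≤ ‖g a‖ + ‖f m a - g a‖ := norm_le_norm_add_norm_sub' _ _
          simp only [norm_norm, Real.norm_of_nonneg (by positivity : (0 : ℝ) ≤ 1 + 2 * ‖g a‖)]
          nlinarith [norm_nonneg (f m a - g a)]
      _ = ∫ a, ‖‖f m a - g a‖‖ * ‖1 + 2 * ‖g a‖‖ ∂μ
          + ∫ a, ‖‖f m a - g a‖‖ * ‖‖f m a - g a‖‖ ∂μ := integral_add (hintegrable hd hw) (hintegrable hd hd)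
      _ ≤ _ := add_le_add (holder hd hw) (holder hd hd)
  refine tendsto_of_tendsto_of_tendsto_of_le_of_le tendsto_const_nhds ?_
    (fun m => integral_nonneg fun a => by positivity) hbound
  simpa using (hN.mul_const _).add (hN.mul hN)

theorem le_mul_two_pow_of_sub_le_mul {b : ℝ} {G B : ℝ → ℝ} (hG : ContinuousOn G (Icc 0 b))
    (hG0 : G 0 = 0) (hG_nonneg : ∀ c ∈ Icc 0 b, 0 ≤ G c) (hB_nonneg : ∀ c ∈ Icc 0 b, 0 ≤ B c)
    (hstep : ∀ d ∈ Icc 0 b, ∀ c ∈ Icc 0 b, d ≤ c → B c - B d ≤ (G c - G d) * B c) (k : ℕ) :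
    ∀ c ∈ Icc 0 b, G c ≤ k / 2 → B c ≤ B 0 * 2 ^ k := by
  induction k with
  | zero =>
    intro c hc hGc
    have := hstep 0 ⟨le_rfl, hc.1.trans hc.2⟩ c hc hc.1
    rw [hG0, sub_zero] at this
    push_cast at hGc
    nlinarith [hB_nonneg c hc]
  | succ k ih =>
    intro c hc hGc
    obtain ⟨d, hd, hGd⟩ : ∃ d ∈ Icc 0 c, G d = min (G c) (k / 2) :=
      intermediate_value_Icc hc.1 (hG.mono (Icc_subset_Icc le_rfl hc.2))
        ⟨by rw [hG0]; exact le_min (hG_nonneg c hc) (by positivity), min_le_left _ _⟩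
    have hd' : d ∈ Icc 0 b := ⟨hd.1, hd.2.trans hc.2⟩
    have hBd := ih d hd' (hGd ▸ min_le_right _ _)
    have hBc := hstep d hd' c hc hd.2
    have hGcd : G c - G d ≤ 1 / 2 := by
      push_cast at hGc
      linarith [le_min (by linarith : G c - 1 / 2 ≤ G c) (by linarith : G c - 1 / 2 ≤ k / 2)]
    rw [pow_succ]
    nlinarith [hB_nonneg c hc]

theorem le_mul_two_pow_of_le_add_integral {a b Γ : ℝ} {f g : ℝ → ℝ} (hb : 0 ≤ b)
    (hg : IntervalIntegrable g volume 0 b) (hg0 : ∀ t, 0 ≤ g t)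
    (hf : ContinuousOn f (Icc 0 b)) (hf0 : ∀ t, 0 ≤ f t)
    (hfg : ∀ x ∈ Icc 0 b, f x ≤ a + ∫ t in (0 : ℝ)..x, g t * f t)
    (hΓ : ∫ t in (0 : ℝ)..b, g t ≤ Γ) :
    ∀ x ∈ Icc 0 b, f x ≤ a * 2 ^ ⌈2 * Γ⌉₊ := by
  set G : ℝ → ℝ := fun x => ∫ t in (0 : ℝ)..x, g t
  set B : ℝ → ℝ := fun x => a + ∫ t in (0 : ℝ)..x, g t * f t
  have hgf : IntervalIntegrable (fun t => g t * f t) volume 0 b :=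
    hg.mul_continuousOn (by rwa [uIcc_of_le hb])
  have hsub : ∀ {d c}, d ∈ Icc 0 b → c ∈ Icc 0 b → uIcc d c ⊆ uIcc 0 b := fun hd hc =>
    uIcc_subset_uIcc (by rwa [uIcc_of_le hb]) (by rwa [uIcc_of_le hb])
  have h0 : (0 : ℝ) ∈ Icc 0 b := left_mem_Icc.2 hb
  have hB : ∀ {d c}, d ∈ Icc 0 b → c ∈ Icc 0 b → B c - B d = ∫ t in d..c, g t * f t :=
    fun hd hc => by
      simp only [B, add_sub_add_left_eq_sub]
      exact intervalIntegral.integral_interval_sub_left (hgf.mono_set (hsub h0 hc))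
        (hgf.mono_set (hsub h0 hd))
  have hG : ∀ {d c}, d ∈ Icc 0 b → c ∈ Icc 0 b → G c - G d = ∫ t in d..c, g t :=
    fun hd hc => intervalIntegral.integral_interval_sub_left (hg.mono_set (hsub h0 hc))
      (hg.mono_set (hsub h0 hd))
  have hG_mono : ∀ {d c}, d ∈ Icc 0 b → c ∈ Icc 0 b → d ≤ c → G d ≤ G c := fun hd hc hdc =>
    sub_nonneg.1 <| hG hd hc ▸ intervalIntegral.integral_nonneg hdc fun t _ => hg0 t
  have hf_le_B : ∀ {y c}, y ∈ Icc 0 b → c ∈ Icc 0 b → y ≤ c → f y ≤ B c := fun hy hc hyc =>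
    (hfg _ hy).trans <| sub_nonneg.1 <| hB hy hc ▸
      intervalIntegral.integral_nonneg hyc fun t _ => mul_nonneg (hg0 t) (hf0 t)
  have hstep : ∀ d ∈ Icc 0 b, ∀ c ∈ Icc 0 b, d ≤ c → B c - B d ≤ (G c - G d) * B c := by
    intro d hd c hc hdc
    rw [hB hd hc, hG hd hc, ← intervalIntegral.integral_mul_const]
    exact intervalIntegral.integral_mono_on hdc (hgf.mono_set (hsub hd hc))
      ((hg.mono_set (hsub hd hc)).mul_const _) fun t ht =>
        mul_le_mul_of_nonneg_left (hf_le_B ⟨hd.1.trans ht.1, ht.2.trans hc.2⟩ hc ht.2) (hg0 t)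
  have hGcont : ContinuousOn G (Icc 0 b) := by
    simpa [uIcc_of_le hb] using intervalIntegral.continuousOn_primitive_interval' hg left_mem_uIcc
  have hG0 : G 0 = 0 := intervalIntegral.integral_same
  intro x hx
  have hGx : G x ≤ ⌈2 * Γ⌉₊ / 2 := by
    linarith [hG_mono hx (right_mem_Icc.2 hb) hx.2, Nat.le_ceil (2 * Γ)]
  have hB0 : B 0 = a := by simp [B]
  calc f x ≤ B x := hf_le_B hx hx le_rfl
    _ ≤ B 0 * 2 ^ ⌈2 * Γ⌉₊ :=
      le_mul_two_pow_of_sub_le_mul hGcont hG0 (fun c hc => hG0 ▸ hG_mono h0 hc hc.1)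
        (fun c hc => (hf0 c).trans (hf_le_B hc hc le_rfl)) hstep _ x hx hGx
    _ = a * 2 ^ ⌈2 * Γ⌉₊ := by rw [hB0]

noncomputable def gronwallWeight (R : ℝ) (σ : ℝ → ℂ) (t : ℝ) : ℝ := 1 + R + ‖σ t‖ + ‖σ t‖ ^ 2

noncomputable def potentialGap (σ₁ σ₂ : ℝ → ℂ) (t : ℝ) : ℝ := ‖σ₁ t - σ₂ t‖ * (1 + ‖σ₁ t‖ + ‖σ₂ t‖)

theorem norm_slSystem_sub_le {R : ℝ} {lam : ℂ} (hR : ‖lam‖ ≤ R) (s₁ s₂ y₁ u₁ y₂ u₂ : ℂ) :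
    ‖(u₁ + s₁ * y₁) - (u₂ + s₂ * y₂)‖
        + ‖(s₁ * u₁ + s₁ ^ 2 * y₁ + lam * y₁) - (s₂ * u₂ + s₂ ^ 2 * y₂ + lam * y₂)‖ ≤
      ‖s₁ - s₂‖ * (1 + ‖s₁‖ + ‖s₂‖) * (‖y₂‖ + ‖u₂‖)
        + (1 + R + ‖s₁‖ + ‖s₁‖ ^ 2) * (‖y₁ - y₂‖ + ‖u₁ - u₂‖) := by
  have hy : ‖(u₁ + s₁ * y₁) - (u₂ + s₂ * y₂)‖ ≤
      ‖u₁ - u₂‖ + ‖s₁‖ * ‖y₁ - y₂‖ + ‖s₁ - s₂‖ * ‖y₂‖ := by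
    rw [show (u₁ + s₁ * y₁) - (u₂ + s₂ * y₂) = (u₁ - u₂) + s₁ * (y₁ - y₂) + (s₁ - s₂) * y₂ by ring,
      ← norm_mul, ← norm_mul]
    exact norm_add₃_le
  have hu : ‖(s₁ * u₁ + s₁ ^ 2 * y₁ + lam * y₁) - (s₂ * u₂ + s₂ ^ 2 * y₂ + lam * y₂)‖ ≤
      ‖s₁‖ * ‖u₁ - u₂‖ + (‖s₁‖ ^ 2 + R) * ‖y₁ - y₂‖ + ‖s₁ - s₂‖ * ‖u₂‖
        + ‖s₁ - s₂‖ * (‖s₁‖ + ‖s₂‖) * ‖y₂‖ := by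
    rw [show (s₁ * u₁ + s₁ ^ 2 * y₁ + lam * y₁) - (s₂ * u₂ + s₂ ^ 2 * y₂ + lam * y₂) =
        s₁ * (u₁ - u₂) + (s₁ ^ 2 + lam) * (y₁ - y₂) + (s₁ - s₂) * u₂
          + (s₁ - s₂) * (s₁ + s₂) * y₂ by ring]
    refine norm_add₄_le.trans ?_
    simp only [norm_mul]
    gcongr
    · exact (norm_add_le _ _).trans (by rw [norm_pow]; gcongr)
    · exact norm_add_le _ _
  have hR0 : 0 ≤ R := (norm_nonneg lam).trans hR
  nlinarith [norm_nonneg (y₁ - y₂), mul_nonneg (add_nonneg hR0 (sq_nonneg ‖s₁‖))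
    (norm_nonneg (u₁ - u₂)), mul_nonneg (mul_nonneg (norm_nonneg (s₁ - s₂))
      (add_nonneg (norm_nonneg s₁) (norm_nonneg s₂))) (norm_nonneg u₂)]

theorem isSLSol_zero (σ : ℝ → ℂ) (lam : ℂ) : IsSLSol σ lam (fun _ => 0) (fun _ => 0) :=
  ⟨continuousOn_const, continuousOn_const, fun x _ => by simp⟩

section Potential

variable {σ σ₁ σ₂ : ℝ → ℂ}

theorem intervalIntegrable_gronwallWeight (hσ : MemLp σ 2 (volume.restrict (Ioo 0 Real.pi)))
    (R : ℝ) : IntervalIntegrable (gronwallWeight R σ) volume 0 Real.pi := by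
  have hsq := intervalIntegrable_mul_of_memLp_two Real.pi_pos.le hσ.norm hσ.norm
  simp only [← sq] at hsq
  exact (intervalIntegrable_const.add
    (intervalIntegrable_of_memLp_two Real.pi_pos.le hσ).norm).add hsq

theorem intervalIntegrable_potentialGap (hσ₁ : MemLp σ₁ 2 (volume.restrict (Ioo 0 Real.pi)))
    (hσ₂ : MemLp σ₂ 2 (volume.restrict (Ioo 0 Real.pi))) :
    IntervalIntegrable (potentialGap σ₁ σ₂) volume 0 Real.pi :=
  intervalIntegrable_mul_of_memLp_two Real.pi_pos.le (hσ₁.sub hσ₂).norm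
    (((memLp_const (1 : ℝ)).add hσ₁.norm).add hσ₂.norm)

theorem integral_gronwallWeight_le (hσ₁ : MemLp σ₁ 2 (volume.restrict (Ioo 0 Real.pi)))
    (hσ₂ : MemLp σ₂ 2 (volume.restrict (Ioo 0 Real.pi))) (R : ℝ) :
    ∫ t in (0 : ℝ)..Real.pi, gronwallWeight R σ₁ t ≤
      (∫ t in (0 : ℝ)..Real.pi, gronwallWeight R σ₂ t)
        + ∫ t in (0 : ℝ)..Real.pi, potentialGap σ₁ σ₂ t := by
  rw [← intervalIntegral.integral_add (intervalIntegrable_gronwallWeight hσ₂ R)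
    (intervalIntegrable_potentialGap hσ₁ hσ₂)]
  refine intervalIntegral.integral_mono_on Real.pi_pos.le (intervalIntegrable_gronwallWeight hσ₁ R)
    ((intervalIntegrable_gronwallWeight hσ₂ R).add (intervalIntegrable_potentialGap hσ₁ hσ₂))
    fun t _ => ?_
  have := norm_sub_norm_le (σ₁ t) (σ₂ t)
  simp only [gronwallWeight, potentialGap]
  nlinarith [norm_nonneg (σ₁ t), norm_nonneg (σ₂ t)]

theorem IsSLSol.intervalIntegrable_rhs {lam : ℂ} {y u : ℝ → ℂ} (h : IsSLSol σ lam y u)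
    (hσ : MemLp σ 2 (volume.restrict (Ioo 0 Real.pi))) :
    IntervalIntegrable (fun t => u t + σ t * y t) volume 0 Real.pi ∧
      IntervalIntegrable (fun t => σ t * u t + σ t ^ 2 * y t + lam * y t) volume 0 Real.pi := by
  obtain ⟨hy, hu, -⟩ := h
  rw [← uIcc_of_le Real.pi_pos.le] at hy hu
  have hσ' := intervalIntegrable_of_memLp_two Real.pi_pos.le hσ
  have hσsq := intervalIntegrable_mul_of_memLp_two Real.pi_pos.le hσ hσ
  simp only [← sq] at hσsq
  exact ⟨hu.intervalIntegrable.add (hσ'.mul_continuousOn hy),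
    ((hσ'.mul_continuousOn hu).add (hσsq.mul_continuousOn hy)).add
      (hy.intervalIntegrable.const_mul lam)⟩

theorem IsSLSol.norm_sub_add_norm_sub_le_add_integral {lam : ℂ} {y₁ u₁ y₂ u₂ : ℝ → ℂ}
    (h₁ : IsSLSol σ₁ lam y₁ u₁) (h₂ : IsSLSol σ₂ lam y₂ u₂)
    (hσ₁ : MemLp σ₁ 2 (volume.restrict (Ioo 0 Real.pi)))
    (hσ₂ : MemLp σ₂ 2 (volume.restrict (Ioo 0 Real.pi))) {x : ℝ} (hx : x ∈ Icc 0 Real.pi) :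
    ‖y₁ x - y₂ x‖ + ‖u₁ x - u₂ x‖ ≤ ‖y₁ 0 - y₂ 0‖ + ‖u₁ 0 - u₂ 0‖ + ∫ t in (0 : ℝ)..x,
      (‖(u₁ t + σ₁ t * y₁ t) - (u₂ t + σ₂ t * y₂ t)‖
        + ‖(σ₁ t * u₁ t + σ₁ t ^ 2 * y₁ t + lam * y₁ t)
          - (σ₂ t * u₂ t + σ₂ t ^ 2 * y₂ t + lam * y₂ t)‖) := by
  have hsub : uIcc 0 x ⊆ uIcc 0 Real.pi :=
    uIcc_subset_uIcc_left (by rwa [uIcc_of_le Real.pi_pos.le])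
  obtain ⟨hF₁, hG₁⟩ := h₁.intervalIntegrable_rhs hσ₁
  obtain ⟨hF₂, hG₂⟩ := h₂.intervalIntegrable_rhs hσ₂
  replace hF := (hF₁.sub hF₂).mono_set hsub
  replace hG := (hG₁.sub hG₂).mono_set hsub
  have hy : ‖y₁ x - y₂ x‖ ≤
      ‖y₁ 0 - y₂ 0‖ + ∫ t in (0 : ℝ)..x, ‖(u₁ t + σ₁ t * y₁ t) - (u₂ t + σ₂ t * y₂ t)‖ := by
    rw [((h₁.2.2 x hx).1 : y₁ x = _), ((h₂.2.2 x hx).1 : y₂ x = _), add_sub_add_comm,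
      ← intervalIntegral.integral_sub (hF₁.mono_set hsub) (hF₂.mono_set hsub)]
    exact (norm_add_le _ _).trans
      (add_le_add le_rfl (intervalIntegral.norm_integral_le_integral_norm hx.1))
  have hu : ‖u₁ x - u₂ x‖ ≤ ‖u₁ 0 - u₂ 0‖ + ∫ t in (0 : ℝ)..x,
      ‖(σ₁ t * u₁ t + σ₁ t ^ 2 * y₁ t + lam * y₁ t)
        - (σ₂ t * u₂ t + σ₂ t ^ 2 * y₂ t + lam * y₂ t)‖ := by
    rw [((h₁.2.2 x hx).2 : u₁ x = _), ((h₂.2.2 x hx).2 : u₂ x = _), sub_sub_sub_comm,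
      ← intervalIntegral.integral_sub (hG₁.mono_set hsub) (hG₂.mono_set hsub)]
    exact (norm_sub_le _ _).trans
      (add_le_add le_rfl (intervalIntegral.norm_integral_le_integral_norm hx.1))
  rw [intervalIntegral.integral_add hF.norm hG.norm]
  linarith

theorem IsSLSol.norm_sub_add_norm_sub_le {R A : ℝ} {lam : ℂ} {y₁ u₁ y₂ u₂ : ℝ → ℂ}
    (h₁ : IsSLSol σ₁ lam y₁ u₁) (h₂ : IsSLSol σ₂ lam y₂ u₂)
    (hσ₁ : MemLp σ₁ 2 (volume.restrict (Ioo 0 Real.pi)))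
    (hσ₂ : MemLp σ₂ 2 (volume.restrict (Ioo 0 Real.pi))) (hR : ‖lam‖ ≤ R)
    (hA : ∀ t ∈ Icc 0 Real.pi, ‖y₂ t‖ + ‖u₂ t‖ ≤ A) {x : ℝ} (hx : x ∈ Icc 0 Real.pi) :
    ‖y₁ x - y₂ x‖ + ‖u₁ x - u₂ x‖ ≤
      ‖y₁ 0 - y₂ 0‖ + ‖u₁ 0 - u₂ 0‖ + A * (∫ t in (0 : ℝ)..Real.pi, potentialGap σ₁ σ₂ t)
        + ∫ t in (0 : ℝ)..x, gronwallWeight R σ₁ t * (‖y₁ t - y₂ t‖ + ‖u₁ t - u₂ t‖) := by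
  have hsub : uIcc 0 x ⊆ uIcc 0 Real.pi :=
    uIcc_subset_uIcc_left (by rwa [uIcc_of_le Real.pi_pos.le])
  have hsub' : uIcc 0 x ⊆ Icc 0 Real.pi := uIcc_of_le Real.pi_pos.le ▸ hsub
  obtain ⟨hF₁, hG₁⟩ := h₁.intervalIntegrable_rhs hσ₁
  obtain ⟨hF₂, hG₂⟩ := h₂.intervalIntegrable_rhs hσ₂
  have hgap := (intervalIntegrable_potentialGap hσ₁ hσ₂).mono_set hsub
  have hwd : IntervalIntegrable
      (fun t => gronwallWeight R σ₁ t * (‖y₁ t - y₂ t‖ + ‖u₁ t - u₂ t‖)) volume 0 x :=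
    ((intervalIntegrable_gronwallWeight hσ₁ R).mono_set hsub).mul_continuousOn
      (((h₁.1.sub h₂.1).norm.add (h₁.2.1.sub h₂.2.1).norm).mono hsub')
  have hgap_le : (∫ t in (0 : ℝ)..x, potentialGap σ₁ σ₂ t) ≤
      ∫ t in (0 : ℝ)..Real.pi, potentialGap σ₁ σ₂ t :=
    intervalIntegral.integral_mono_interval le_rfl hx.1 hx.2
      (ae_of_all _ fun t => by unfold potentialGap; positivity)
      (intervalIntegrable_potentialGap hσ₁ hσ₂)
  have hA0 : 0 ≤ A :=
    (by positivity : (0 : ℝ) ≤ ‖y₂ 0‖ + ‖u₂ 0‖).trans (hA 0 (left_mem_Icc.2 Real.pi_pos.le))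
  have hrhs := intervalIntegral.integral_mono_on hx.1
    ((((hF₁.sub hF₂).norm.add (hG₁.sub hG₂).norm)).mono_set hsub) ((hgap.const_mul A).add hwd)
    fun t ht => (norm_slSystem_sub_le hR (σ₁ t) (σ₂ t) (y₁ t) (u₁ t) (y₂ t) (u₂ t)).trans <| by
      have hAt := hA t (hsub' (by rwa [uIcc_of_le hx.1]))
      have : 0 ≤ potentialGap σ₁ σ₂ t := by unfold potentialGap; positivity
      simp only [gronwallWeight, potentialGap] at this ⊢
      nlinarith
  rw [intervalIntegral.integral_add (hgap.const_mul A) hwd,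
    intervalIntegral.integral_const_mul] at hrhs
  nlinarith [h₁.norm_sub_add_norm_sub_le_add_integral h₂ hσ₁ hσ₂ hx]

theorem IsSLSol.norm_sub_add_norm_sub_le_mul_two_pow {R A Γ : ℝ} {lam : ℂ} {y₁ u₁ y₂ u₂ : ℝ → ℂ}
    (h₁ : IsSLSol σ₁ lam y₁ u₁) (h₂ : IsSLSol σ₂ lam y₂ u₂)
    (hσ₁ : MemLp σ₁ 2 (volume.restrict (Ioo 0 Real.pi)))
    (hσ₂ : MemLp σ₂ 2 (volume.restrict (Ioo 0 Real.pi))) (hR : ‖lam‖ ≤ R)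
    (hA : ∀ t ∈ Icc 0 Real.pi, ‖y₂ t‖ + ‖u₂ t‖ ≤ A)
    (hΓ : ∫ t in (0 : ℝ)..Real.pi, gronwallWeight R σ₁ t ≤ Γ) :
    ∀ x ∈ Icc 0 Real.pi, ‖y₁ x - y₂ x‖ + ‖u₁ x - u₂ x‖ ≤
      (‖y₁ 0 - y₂ 0‖ + ‖u₁ 0 - u₂ 0‖ + A * ∫ t in (0 : ℝ)..Real.pi, potentialGap σ₁ σ₂ t)
        * 2 ^ ⌈2 * Γ⌉₊ :=
  le_mul_two_pow_of_le_add_integral Real.pi_pos.le (intervalIntegrable_gronwallWeight hσ₁ R)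
    (fun t => by have := (norm_nonneg lam).trans hR; unfold gronwallWeight; positivity)
    ((h₁.1.sub h₂.1).norm.add (h₁.2.1.sub h₂.2.1).norm) (fun t => by positivity)
    (fun _ hx => h₁.norm_sub_add_norm_sub_le h₂ hσ₁ hσ₂ hR hA hx) hΓ

theorem IsSLSol.norm_add_norm_le {R : ℝ} {lam : ℂ} {y u : ℝ → ℂ} (h : IsSLSol σ lam y u)
    (hσ : MemLp σ 2 (volume.restrict (Ioo 0 Real.pi))) (hR : ‖lam‖ ≤ R) :
    ∀ x ∈ Icc 0 Real.pi, ‖y x‖ + ‖u x‖ ≤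
      (‖y 0‖ + ‖u 0‖) * 2 ^ ⌈2 * ∫ t in (0 : ℝ)..Real.pi, gronwallWeight R σ t⌉₊ := by
  simpa using h.norm_sub_add_norm_sub_le_mul_two_pow (isSLSol_zero σ lam) hσ hσ hR (A := 0)
    (by simp) le_rfl

end Potential

/-- **Continuous dependence of the solution on the potential** (used in Lemma 5.7): if
`σ_m → σ` in `L₂(0,π)`, then the solutions `φ_m(·,λ)` (with quasi-derivatives `u_m(·,λ)`)
normalized by `φ_m(0,λ) = 1`, `u_m(0,λ) = 0` converge to `φ(·,λ)`, `u(·,λ)` uniformly on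
`[0,π] × {|λ| ≤ R}` for every `R > 0`. -/
theorem solution_continuous_dependence_on_potential
    (σm : ℕ → ℝ → ℂ) (σ : ℝ → ℂ)
    (hσm : ∀ m, MemLp (σm m) 2 (volume.restrict (Ioo 0 Real.pi)))
    (hσ : MemLp σ 2 (volume.restrict (Ioo 0 Real.pi)))
    (hconv : Tendsto (fun m =>
      eLpNorm (fun x => σm m x - σ x) 2 (volume.restrict (Ioo 0 Real.pi))) atTop (𝓝 0))
    (φm um : ℕ → ℂ → ℝ → ℂ) (φ u : ℂ → ℝ → ℂ)
    (hm : ∀ m (lam : ℂ), IsSLSol (σm m) lam (φm m lam) (um m lam) ∧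
      φm m lam 0 = 1 ∧ um m lam 0 = 0)
    (h : ∀ lam : ℂ, IsSLSol σ lam (φ lam) (u lam) ∧ φ lam 0 = 1 ∧ u lam 0 = 0) :
    ∀ R : ℝ, 0 < R → ∀ ε : ℝ, 0 < ε → ∃ M₀ : ℕ, ∀ m, M₀ ≤ m →
      ∀ x ∈ Icc (0 : ℝ) Real.pi, ∀ lam : ℂ, ‖lam‖ ≤ R →
        ‖φm m lam x - φ lam x‖ + ‖um m lam x - u lam x‖ ≤ ε := by
  intro R _ ε hε
  set Γ := ∫ t in (0 : ℝ)..Real.pi, gronwallWeight R σ t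
  set A : ℝ := 2 ^ ⌈2 * Γ⌉₊
  set K : ℝ := 2 ^ ⌈2 * (Γ + 1)⌉₊
  have hbound : ∀ lam : ℂ, ‖lam‖ ≤ R → ∀ t ∈ Icc 0 Real.pi, ‖φ lam t‖ + ‖u lam t‖ ≤ A :=
    fun lam hlam t ht => by
      obtain ⟨hsol, hφ0, hu0⟩ := h lam
      simpa [hφ0, hu0] using hsol.norm_add_norm_le hσ hlam t ht
  have hgap : Tendsto (fun m => ∫ t in (0 : ℝ)..Real.pi, potentialGap (σm m) σ t) atTop (𝓝 0) := by
    simpa only [intervalIntegral.integral_of_le Real.pi_pos.le, integral_Ioc_eq_integral_Ioo,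
      potentialGap] using tendsto_integral_norm_sub_mul_of_tendsto_eLpNorm hσm hσ hconv
  obtain ⟨M₀, hM₀⟩ := eventually_atTop.1
    (hgap.eventually (ge_mem_nhds (lt_min one_pos (by positivity : 0 < ε / (A * K)))))
  refine ⟨M₀, fun m hm₀ x hx lam hlam => ?_⟩
  obtain ⟨hsolm, hφm0, hum0⟩ := hm m lam
  obtain ⟨hsol, hφ0, hu0⟩ := h lam
  have hgap_le := le_min_iff.1 (hM₀ m hm₀)
  have hΓm : ∫ t in (0 : ℝ)..Real.pi, gronwallWeight R (σm m) t ≤ Γ + 1 :=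
    (integral_gronwallWeight_le (hσm m) hσ R).trans (by linarith)
  have hdiff := hsolm.norm_sub_add_norm_sub_le_mul_two_pow hsol (hσm m) hσ hlam
    (hbound lam hlam) hΓm x hx
  rw [hφm0, hφ0, hum0, hu0, sub_self, sub_self, norm_zero, zero_add, zero_add] at hdiff
  calc _ ≤ A * (∫ t in (0 : ℝ)..Real.pi, potentialGap (σm m) σ t) * K := hdiff
    _ ≤ A * (ε / (A * K)) * K := by gcongr; exact hgap_le.2
    _ = ε := by rw [mul_right_comm]; exact mul_div_cancel₀ ε (by positivity)
end
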